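/- In the free group F_K, w_1 · w_n = w_n · w_1 for all n ≥ 0, where w_n is the sum of all words of length n in the group algebra. Consequently the subalgebra generated by w_1 contains all w_n and is commutative. -/

import Mathlib

/-!
Left multiplication by `(mk [ℓ])⁻¹` shortens a nontrivial reduced word by one letter when `ℓ` is
its first letter and lengthens it by one otherwise. Counting the letters of each kind gives the
three-term recurrence `w 1 * w (n + 1) = w (n + 2) + c_n • w n` with `c_0 = 2K` and
`c_n = 2K - 1` for `n ≥ 1`, so by induction every `w n` is a polynomial in `w 1`. All `w n` thus
lie in the algebra generated by the single element `w 1`, which is commutative.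
-/

namespace FreeGroup

variable {α : Type*} [DecidableEq α]

theorem norm_inv_mk_singleton (ℓ : α × Bool) : norm (mk [ℓ])⁻¹ = 1 := by
  rw [norm_inv_eq, norm, toWord_mk, reduce_singleton, List.length_singleton]

theorem mk_singleton_injective : Function.Injective (fun ℓ : α × Bool => mk [ℓ]) := by
  intro ℓ ℓ' h
  simpa [toWord_mk] using congrArg toWord h

theorem norm_eq_one_iff {g : FreeGroup α} : norm g = 1 ↔ ∃ ℓ, mk [ℓ] = g := by
  refine ⟨fun h => ?_, ?_⟩
  · obtain ⟨ℓ, hℓ⟩ := List.length_eq_one_iff.mp h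
    exact ⟨ℓ, by rw [← hℓ, mk_toWord]⟩
  · rintro ⟨ℓ, rfl⟩
    rw [← norm_inv_eq, norm_inv_mk_singleton]

theorem norm_inv_mk_singleton_mul_of_toWord_eq_cons {g : FreeGroup α} {a : α × Bool}
    {t : List (α × Bool)} (hg : g.toWord = a :: t) (ℓ : α × Bool) :
    norm ((mk [ℓ])⁻¹ * g) = if ℓ = a then t.length else t.length + 2 := by
  have hred : reduce (a :: t) = a :: t := hg ▸ g.reduce_toWord
  have hcancel : (ℓ.1 = a.1 ∧ (!ℓ.2) = !a.2) ↔ ℓ = a := by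
    rw [Bool.not_inj_iff, Prod.ext_iff]
  have hinv : (mk [ℓ])⁻¹ = mk [(ℓ.1, !ℓ.2)] := inv_mk
  rw [hinv, norm, toWord_mul, toWord_mk, reduce_singleton, List.singleton_append, hg, reduce.cons,
    hred]
  dsimp only
  rw [if_congr hcancel rfl rfl]
  split_ifs <;> simp

variable [Fintype α] {M : Type*} [AddCommMonoid M]

theorem sum_norm_inv_mk_singleton_mul_of_toWord_eq_cons {g : FreeGroup α} {a : α × Bool}
    {t : List (α × Bool)} (hg : g.toWord = a :: t) (f : ℕ → M) :
    ∑ ℓ : α × Bool, f (norm ((mk [ℓ])⁻¹ * g)) =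
      f t.length + (2 * Fintype.card α - 1) • f (t.length + 2) := by
  simp_rw [norm_inv_mk_singleton_mul_of_toWord_eq_cons hg, apply_ite f]
  rw [Fintype.sum_eq_add_sum_compl a, if_pos rfl,
    Finset.sum_congr rfl fun ℓ hℓ => if_neg (by simpa using hℓ), Finset.sum_const,
    Finset.card_compl, Finset.card_singleton, Fintype.card_prod, Fintype.card_bool, mul_comm]

end FreeGroup

theorem SubringClass.forall_mem_of_three_term_recurrence {A S : Type*} [Ring A] [SetLike S A]
    [SubringClass S A] (s : S) {w : ℕ → A} (c : ℕ → ℕ) (h0 : w 0 ∈ s) (h1 : w 1 ∈ s)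
    (hrec : ∀ n, w 1 * w (n + 1) = w (n + 2) + c n • w n) (n : ℕ) : w n ∈ s := by
  induction n using Nat.twoStepInduction with
  | zero => exact h0
  | one => exact h1
  | more n hn hn1 =>
    rw [eq_sub_of_add_eq (hrec n).symm]
    exact sub_mem (mul_mem h1 hn1) (nsmul_mem hn _)

namespace FreeGroup

open MonoidAlgebra

variable {α R : Type*} [DecidableEq α] [Semiring R] {w : ℕ → MonoidAlgebra R (FreeGroup α)}

def IsSphereSums (w : ℕ → MonoidAlgebra R (FreeGroup α)) : Prop :=
  ∀ n g, (w n).coeff g = if norm g = n then 1 else 0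

theorem IsSphereSums.apply_zero (hw : IsSphereSums w) : w 0 = 1 := by
  ext g
  simp only [hw _ _, one_def, coeff_single, Finsupp.single_apply, norm_eq_zero, eq_comm]

variable [Fintype α]

theorem IsSphereSums.apply_one (hw : IsSphereSums w) :
    w 1 = ∑ ℓ : α × Bool, single (mk [ℓ]) 1 := by
  ext g
  rw [hw, coeff_sum, Finset.sum_apply']
  simp only [coeff_single, Finsupp.single_apply]
  by_cases hg : norm g = 1
  · obtain ⟨ℓ₀, rfl⟩ := norm_eq_one_iff.mp hg
    simp only [mk_singleton_injective.eq_iff, Finset.sum_ite_eq', Finset.mem_univ, if_true, hg]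
  · rw [if_neg hg]
    refine (Finset.sum_eq_zero fun ℓ _ => if_neg ?_).symm
    rintro rfl
    exact hg (norm_eq_one_iff.mpr ⟨ℓ, rfl⟩)

theorem IsSphereSums.coeff_apply_one_mul (hw : IsSphereSums w)
    (x : MonoidAlgebra R (FreeGroup α)) (g : FreeGroup α) :
    (w 1 * x).coeff g = ∑ ℓ : α × Bool, x.coeff ((mk [ℓ])⁻¹ * g) := by
  simp only [hw.apply_one, Finset.sum_mul, coeff_sum, Finset.sum_apply', coeff_single_mul_apply,
    one_mul]

theorem IsSphereSums.apply_one_mul_apply_succ (hw : IsSphereSums w) (n : ℕ) :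
    w 1 * w (n + 1) =
      w (n + 2) + (if n = 0 then 2 * Fintype.card α else 2 * Fintype.card α - 1) • w n := by
  ext g
  simp only [hw.coeff_apply_one_mul, coeff_add, coeff_smul, Finsupp.add_apply,
    Finsupp.smul_apply, hw _ _]
  rcases hg : g.toWord with _ | ⟨a, t⟩
  · obtain rfl : g = 1 := toWord_eq_nil_iff.mp hg
    simp only [mul_one, norm_inv_mk_singleton, norm_one]
    rcases n with _ | n <;> simp [Fintype.card_prod, mul_comm]
  · have hnorm : norm g = t.length + 1 := by rw [norm, hg, List.length_cons]
    rw [sum_norm_inv_mk_singleton_mul_of_toWord_eq_cons hg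
      (fun m => if m = n + 1 then (1 : R) else 0), hnorm]
    rcases n with _ | n <;> simp

end FreeGroup

theorem radial_commutes_general (K : ℕ)
    (W : ℕ → Finset (FreeGroup (Fin K)))
    (hW : ∀ n g, g ∈ W n ↔ FreeGroup.norm g = n)
    (w : ℕ → MonoidAlgebra ℂ (FreeGroup (Fin K)))
    (hw : ∀ n, w n = ∑ g ∈ W n, MonoidAlgebra.single g (1 : ℂ)) :
    (∀ n, w 1 * w n = w n * w 1) ∧
    (∀ n, w n ∈ Algebra.adjoin ℂ ({w 1} : Set (MonoidAlgebra ℂ (FreeGroup (Fin K))))) ∧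
    (∀ x ∈ Algebra.adjoin ℂ ({w 1} : Set (MonoidAlgebra ℂ (FreeGroup (Fin K)))),
      ∀ y ∈ Algebra.adjoin ℂ ({w 1} : Set (MonoidAlgebra ℂ (FreeGroup (Fin K)))),
        x * y = y * x) := by
  have hsphere : FreeGroup.IsSphereSums w := fun n g => by
    simp [hw, MonoidAlgebra.coeff_sum, Finset.sum_apply', Finsupp.single_apply, hW]
  set A := Algebra.adjoin ℂ ({w 1} : Set (MonoidAlgebra ℂ (FreeGroup (Fin K))))
  have hmem : ∀ n, w n ∈ A :=
    SubringClass.forall_mem_of_three_term_recurrence A _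
      (hsphere.apply_zero ▸ one_mem A) (Algebra.self_mem_adjoin_singleton ℂ _)
      hsphere.apply_one_mul_apply_succ
  have hcomm : ∀ x ∈ A, ∀ y ∈ A, x * y = y * x := fun x hx y hy =>
    (Algebra.commute_of_mem_adjoin_singleton_of_commute hy
      (Algebra.commute_of_mem_adjoin_self hx).symm).eq
  exact ⟨fun n => hcomm _ (hmem 1) _ (hmem n), hmem, hcomm⟩

/-- In the free group `F_K`, `w 1 * w n = w n * w 1` for all `n ≥ 0`, where `w n` is
the sum of all words of length `n` in the group algebra.  Consequently the subalgebra
generated by `w 1` contains all the `w n` (and in particular is commutative). -/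
theorem radial_commutes (K : ℕ) (hK : 2 ≤ K)
    (W : ℕ → Finset (FreeGroup (Fin K)))
    (hW : ∀ n g, g ∈ W n ↔ FreeGroup.norm g = n)
    (w : ℕ → MonoidAlgebra ℂ (FreeGroup (Fin K)))
    (hw : ∀ n, w n = ∑ g ∈ W n, MonoidAlgebra.single g (1 : ℂ)) :
    (∀ n, w 1 * w n = w n * w 1) ∧
    (∀ n, w n ∈ Algebra.adjoin ℂ ({w 1} : Set (MonoidAlgebra ℂ (FreeGroup (Fin K))))) ∧
    (∀ x ∈ Algebra.adjoin ℂ ({w 1} : Set (MonoidAlgebra ℂ (FreeGroup (Fin K)))),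
      ∀ y ∈ Algebra.adjoin ℂ ({w 1} : Set (MonoidAlgebra ℂ (FreeGroup (Fin K)))),
        x * y = y * x) :=
  radial_commutes_general K W hW w hw
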